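/- The ideal I = (x_1x_2, x_1x_3, x_2^2, x_2x_3) in K[x_1,x_2,x_3] arises from the compatible connected shifted quasi-Ferrers diagram with λ = (3,3), μ = (1,1), but I is not a stable monomial ideal, nor does it become stable under any permutation of the variables x_1, x_2, x_3. -/

import Mathlib

open MvPolynomial Finsupp

/-- The monomial ideal generated by the monomials with exponent vectors in `S`. -/
noncomputable def monomialIdeal (K : Type*) [Field K] {n : ℕ} (S : Finset (Fin n →₀ ℕ)) :
    Ideal (MvPolynomial (Fin n) K) :=
  Ideal.span ((fun s => (monomial s (1 : K))) '' S)

/-- `I` is a stable monomial ideal: for every monomial `m ∈ I` and every `i < max(m)`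
(where `j = max(m)` is the largest index with nonzero exponent), `m·x_i/x_j ∈ I`.
Here the variables `x_1,…,x_n` are indexed by `Fin n`. -/
def IsStable {K : Type*} [Field K] {n : ℕ} (I : Ideal (MvPolynomial (Fin n) K)) : Prop :=
  ∀ (s : Fin n →₀ ℕ) (i j : Fin n), monomial s (1 : K) ∈ I →
    s j ≠ 0 → (∀ k, j < k → s k = 0) → i < j →
    monomial (s + single i 1 - single j 1) (1 : K) ∈ I

/-- The diagram `D_{λ−μ}` for `λ = (3,3)`, `μ = (1,1)`, i.e. `{(1,2),(1,3),(2,2),(2,3)}`,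
with the point `(i,j)` recorded as the pair of variable indices `(i−1, j−1)` in `Fin 3`. -/
def exampleDiagram : Finset (Fin 3 × Fin 3) := {(0, 1), (0, 2), (1, 1), (1, 2)}

/-!
After renaming by `π`, the ideal is generated by the monomials `x_{π i} x_{π j}` for `(i, j)`
in the diagram. Since `(0, 2)` lies in the diagram, `x_{π 0} x_{π 2}` is a generator, and
stability (applied to the larger of the two variables) puts `x_{π 0}²` or `x_{π 2}²` into the
ideal. But a generator divides a square `x_c²` only if it equals it, and the only square
generator is `x_{π 1}²`, contradicting injectivity of `π`. The unpermuted case is `π = 1`.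
-/

theorem Finsupp.single_add_single_le_single_two_iff {α : Type*} {p q c : α} :
    single p 1 + single q 1 ≤ single c 2 ↔ p = c ∧ q = c := by
  constructor
  · intro h
    have hp := h p
    have hq := h q
    simp only [coe_add, Pi.add_apply] at hp hq
    constructor <;> by_contra hne <;> simp_all
  · rintro ⟨rfl, rfl⟩
    rw [← single_add]

section

variable {K : Type*} [Field K] {n : ℕ}

theorem monomial_mem_monomialIdeal_iff {S : Finset (Fin n →₀ ℕ)} {t : Fin n →₀ ℕ} :
    monomial t (1 : K) ∈ monomialIdeal K S ↔ ∃ s ∈ S, s ≤ t := by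
  simp [monomialIdeal, mem_ideal_span_monomial_image]

theorem map_rename_monomialIdeal (π : Equiv.Perm (Fin n)) (S : Finset (Fin n →₀ ℕ)) :
    (monomialIdeal K S).map (rename π) = monomialIdeal K (S.image (mapDomain π)) := by
  simp [monomialIdeal, Ideal.map_span, Set.image_image, rename_monomial]

theorem IsStable.monomial_single_two_mem_or {J : Ideal (MvPolynomial (Fin n) K)}
    (hJ : IsStable J) {a b : Fin n} (hab : a ≠ b)
    (h : monomial (single a 1 + single b 1) (1 : K) ∈ J) :
    monomial (single a 2) (1 : K) ∈ J ∨ monomial (single b 2) (1 : K) ∈ J := by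
  wlog hlt : a < b generalizing a b
  · rw [add_comm] at h
    exact (this hab.symm h (hab.lt_or_gt.resolve_left hlt)).symm
  left
  have hb : (single a 1 + single b 1 : Fin n →₀ ℕ) b ≠ 0 := by simp
  have hmax : ∀ k, b < k → (single a 1 + single b 1 : Fin n →₀ ℕ) k = 0 := fun k hk => by
    simp [(hlt.trans hk).ne, hk.ne]
  have hshift :
      single a 1 + single b 1 + single a 1 - single b 1 = (single a 2 : Fin n →₀ ℕ) := by
    rw [add_right_comm, add_tsub_cancel_right, ← single_add]
  simpa [hshift] using hJ _ a b h hb hmax hlt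

/-- The specialization of the diagram `D`. -/
noncomputable def diagramIdeal (K : Type*) [Field K] (D : Finset (Fin n × Fin n)) :
    Ideal (MvPolynomial (Fin n) K) :=
  monomialIdeal K (D.image fun p => single p.1 1 + single p.2 1)

theorem monomial_mem_diagramIdeal {D : Finset (Fin n × Fin n)} {p q : Fin n} (h : (p, q) ∈ D) :
    monomial (single p 1 + single q 1) (1 : K) ∈ diagramIdeal K D :=
  monomial_mem_monomialIdeal_iff.mpr ⟨_, Finset.mem_image_of_mem _ h, le_rfl⟩

theorem monomial_single_two_mem_diagramIdeal_iff {D : Finset (Fin n × Fin n)} {c : Fin n} :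
    monomial (single c 2) (1 : K) ∈ diagramIdeal K D ↔ (c, c) ∈ D := by
  simp [diagramIdeal, monomial_mem_monomialIdeal_iff, single_add_single_le_single_two_iff]

theorem map_rename_diagramIdeal (π : Equiv.Perm (Fin n)) (D : Finset (Fin n × Fin n)) :
    (diagramIdeal K D).map (rename π) = diagramIdeal K (D.image (Prod.map π π)) := by
  simp [diagramIdeal, map_rename_monomialIdeal, Finset.image_image, Function.comp_def,
    mapDomain_add]

theorem not_isStable_map_rename_diagramIdeal_exampleDiagram (π : Equiv.Perm (Fin 3)) :
    ¬ IsStable ((diagramIdeal K exampleDiagram).map (rename π)) := by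
  rw [map_rename_diagramIdeal]
  intro hJ
  have hinj : Function.Injective (Prod.map π π) := π.injective.prodMap π.injective
  have h02 : ((0 : Fin 3), (2 : Fin 3)) ∈ exampleDiagram := by decide
  have hmem := monomial_mem_diagramIdeal (K := K) (Finset.mem_image_of_mem (Prod.map π π) h02)
  rcases hJ.monomial_single_two_mem_or (π.injective.ne (by decide)) hmem with h | h <;>
    rw [monomial_single_two_mem_diagramIdeal_iff] at h
  · exact absurd ((hinj.mem_finset_image (a := (0, 0))).mp h) (by decide)
  · exact absurd ((hinj.mem_finset_image (a := (2, 2))).mp h) (by decide)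

end

/-- The ideal `I = (x_1x_2, x_1x_3, x_2², x_2x_3) ⊆ K[x_1,x_2,x_3]` arises as the
specialization of the compatible connected shifted quasi-Ferrers diagram with
`λ = (3,3)`, `μ = (1,1)`, but `I` is not stable, nor does it become stable under any
permutation of the variables. -/
theorem example_compatible_not_stable (K : Type*) [Field K] :
    monomialIdeal K (exampleDiagram.image fun p => single p.1 1 + single p.2 1) =
      monomialIdeal K ({single 0 1 + single 1 1, single 0 1 + single 2 1,
        single 1 2, single 1 1 + single 2 1} : Finset (Fin 3 →₀ ℕ)) ∧
    ¬ IsStable (monomialIdeal K ({single 0 1 + single 1 1, single 0 1 + single 2 1,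
        single 1 2, single 1 1 + single 2 1} : Finset (Fin 3 →₀ ℕ))) ∧
    ∀ π : Equiv.Perm (Fin 3),
      ¬ IsStable (Ideal.map (rename π)
        (monomialIdeal K ({single 0 1 + single 1 1, single 0 1 + single 2 1,
          single 1 2, single 1 1 + single 2 1} : Finset (Fin 3 →₀ ℕ)))) := by
  have hI : diagramIdeal K exampleDiagram = monomialIdeal K ({single 0 1 + single 1 1,
      single 0 1 + single 2 1, single 1 2, single 1 1 + single 2 1} : Finset (Fin 3 →₀ ℕ)) := by
    simp [diagramIdeal, exampleDiagram, ← single_add]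
  rw [← hI]
  refine ⟨rfl, ?_, not_isStable_map_rename_diagramIdeal_exampleDiagram⟩
  simpa using not_isStable_map_rename_diagramIdeal_exampleDiagram (K := K) (Equiv.refl _)
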